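/- arXiv:2407.00240 — 3 statements merged into one kernel-verified Lean document; each statement's English description precedes it below -/
import Mathlib

section
/- Let g₁, g₂ : ℝ → ℂ be integrable and bounded, and define f₁(x) := (1/(2π))·∫_ℝ g₁(y)·e^{−i·x·y} dy and f₂(x) := (1/(2π))·∫_ℝ g₂(y)·e^{−i·x·y} dy, assumed real-valued. Then the transformed covariance satisfies τ(f₁,f₂) = (1/(4π²))·∫_{ℝ²} g₁(y)·g₂(z)·(e^{−y·z·σij} − 1)·e^{−(y²·σii + z²·σjj)/2} dy dz. -/
open MeasureTheory Real

/-- Centered bivariate Gaussian density with covariance entries `σii, σjj, σij`. -/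
noncomputable def gaussPDF2 (σii σjj σij : ℝ) (x w : ℝ) : ℝ :=
  (1 / (2 * π * Real.sqrt (σii * σjj - σij ^ 2))) *
    Real.exp (-(σjj * x ^ 2 - 2 * σij * x * w + σii * w ^ 2) / (2 * (σii * σjj - σij ^ 2)))

/-- Centered univariate Gaussian density with variance `σ`. -/
noncomputable def gaussPDF1 (σ x : ℝ) : ℝ :=
  (1 / Real.sqrt (2 * π * σ)) * Real.exp (-x ^ 2 / (2 * σ))

/-- Transformed mean `ν(f)`. -/
noncomputable def transMean (σ : ℝ) (f : ℝ → ℝ) : ℝ := ∫ x : ℝ, f x * gaussPDF1 σ x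

/-- Transformed covariance `τ(f, g)`. -/
noncomputable def transCov (σii σjj σij : ℝ) (f g : ℝ → ℝ) : ℝ :=
  (∫ q : ℝ × ℝ, f q.1 * g q.2 * gaussPDF2 σii σjj σij q.1 q.2) -
    transMean σii f * transMean σjj g

open ProbabilityTheory Complex
open scoped NNReal

/-!
Write `f₁`, `f₂` as Fourier integrals and exchange the order of integration (Fubini applies
because the integrands are dominated by `‖g₁ y‖ * ‖g₂ z‖` times a Gaussian density). Each
Gaussian expectation then becomes an integral of `g₁`, `g₂` against a Gaussian characteristic
function: `e^{-(σii y² + 2 σij y z + σjj z²)/2}` for the joint law and `e^{-σ y²/2}` for a marginal.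
The joint one is computed by factoring the bivariate density into the law `N(0, σii)` of the
first coordinate times the conditional law `N(σij/σii · x, d/σii)` of the second. Subtracting the
product of the means leaves the factor `e^{-σij y z} - 1`.
-/

lemma norm_cexp_neg_I_mul (x y : ℝ) : ‖cexp (-I * x * y)‖ = 1 := by
  simp [norm_exp]

lemma integral_integral_mul_comm_of_norm_le_one {α β : Type*} [MeasurableSpace α]
    [MeasurableSpace β] {μ : Measure α} {ν : Measure β} [SFinite μ] [SFinite ν]
    {p : α → ℝ} {g : β → ℂ} {K : α → β → ℂ} (hp : Integrable p μ) (hg : Integrable g ν)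
    (hK : AEStronglyMeasurable (Function.uncurry K) (μ.prod ν)) (hK1 : ∀ x y, ‖K x y‖ ≤ 1) :
    ∫ x, (∫ y, g y * K x y ∂ν) * p x ∂μ = ∫ y, g y * ∫ x, K x y * p x ∂μ ∂ν := by
  have hint : Integrable (Function.uncurry fun x y => g y * K x y * p x) (μ.prod ν) := by
    refine (hp.norm.mul_prod hg.norm).mono'
      ((hg.1.comp_snd.mul hK).mul (hp.ofReal (𝕜 := ℂ)).1.comp_fst) (.of_forall fun q => ?_)
    simp only [Function.uncurry, norm_mul, norm_real]
    calc ‖g q.2‖ * ‖K q.1 q.2‖ * ‖p q.1‖ ≤ ‖g q.2‖ * 1 * ‖p q.1‖ := by gcongr; exact hK1 _ _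
      _ = ‖p q.1‖ * ‖g q.2‖ := by ring
  simp_rw [← integral_mul_const]
  rw [integral_integral_swap hint]
  simp_rw [mul_assoc, integral_const_mul]

lemma MeasureTheory.Integrable.mul_cexp_neg_of_nonneg {α : Type*} [MeasurableSpace α]
    {μ : Measure α} {g : α → ℂ} {Q : α → ℝ} (hg : Integrable g μ) (hQ : Measurable Q)
    (hQ0 : ∀ r, 0 ≤ Q r) :
    Integrable (fun r => g r * cexp (-(Q r : ℂ))) μ := by
  refine hg.mul_bdd (c := 1) (by fun_prop) (.of_forall fun r => ?_)
  rw [← ofReal_neg, norm_exp_ofReal, Real.exp_le_one_iff, neg_nonpos]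
  exact hQ0 r

lemma quadForm_nonneg {a b c : ℝ} (ha : 0 < a) (hd : 0 < a * b - c ^ 2) (y z : ℝ) :
    0 ≤ a * y ^ 2 + 2 * c * y * z + b * z ^ 2 := by
  nlinarith [sq_nonneg (a * y + c * z), mul_nonneg hd.le (sq_nonneg z)]

lemma integral_cexp_mul_gaussianPDFReal (m : ℝ) {v : ℝ≥0} (hv : v ≠ 0) (t : ℝ) :
    ∫ x : ℝ, cexp (-I * x * t) * gaussianPDFReal m v x = cexp (-I * m * t - v * t ^ 2 / 2) := by
  have h := complexMGF_id_gaussianReal (μ := m) (v := v) (-I * t)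
  rw [complexMGF, integral_gaussianReal_eq_integral_smul hv] at h
  convert h using 2
  · ext x
    rw [real_smul, mul_comm, id, mul_right_comm]
  · linear_combination (-(v : ℂ) * t ^ 2 / 2) * I_sq

lemma gaussPDF1_eq_gaussianPDFReal {σ : ℝ} (hσ : 0 ≤ σ) :
    gaussPDF1 σ = gaussianPDFReal 0 σ.toNNReal := by
  ext x
  simp [gaussPDF1, gaussianPDFReal, Real.coe_toNNReal σ hσ, one_div]

lemma gaussPDF2_eq_mul_gaussianPDFReal {σii σjj σij : ℝ} (hii : 0 < σii)
    (hd : 0 < σii * σjj - σij ^ 2) (x w : ℝ) :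
    gaussPDF2 σii σjj σij x w = gaussianPDFReal 0 σii.toNNReal x *
      gaussianPDFReal (σij / σii * x) ((σii * σjj - σij ^ 2) / σii).toNNReal w := by
  rw [gaussianPDFReal, gaussianPDFReal, Real.coe_toNNReal _ hii.le,
    Real.coe_toNNReal _ (by positivity), gaussPDF2, mul_mul_mul_comm, ← Real.exp_add, ← mul_inv,
    ← Real.sqrt_mul (by positivity), one_div]
  congr 3
  · rw [show 2 * π * σii * (2 * π * ((σii * σjj - σij ^ 2) / σii))
        = (2 * π) ^ 2 * (σii * σjj - σij ^ 2) by field_simp,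
      Real.sqrt_mul (by positivity), Real.sqrt_sq (by positivity)]
  · generalize hD : σii * σjj - σij ^ 2 = D at hd ⊢
    have hjj : σjj = (D + σij ^ 2) / σii := eq_div_of_mul_eq hii.ne' (by rw [← hD]; ring)
    subst hjj
    field_simp
    ring

lemma integrable_gaussPDF2 {σii σjj σij : ℝ} (hii : 0 < σii) (hd : 0 < σii * σjj - σij ^ 2) :
    Integrable (fun q : ℝ × ℝ => gaussPDF2 σii σjj σij q.1 q.2) := by
  have hv : ((σii * σjj - σij ^ 2) / σii).toNNReal ≠ 0 :=
    (Real.toNNReal_pos.2 (by positivity)).ne'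
  simp_rw [gaussPDF2_eq_mul_gaussianPDFReal hii hd]
  rw [Measure.volume_eq_prod, integrable_prod_iff (by fun_prop)]
  refine ⟨.of_forall fun x =>
    (integrable_gaussianPDFReal (σij / σii * x) _).const_mul (gaussianPDFReal 0 σii.toNNReal x), ?_⟩
  simp_rw [norm_mul, Real.norm_of_nonneg (gaussianPDFReal_nonneg _ _ _), integral_const_mul,
    integral_gaussianPDFReal_eq_one _ hv, mul_one]
  exact integrable_gaussianPDFReal _ _

lemma integral_cexp_mul_gaussPDF2 {σii σjj σij : ℝ} (hii : 0 < σii)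
    (hd : 0 < σii * σjj - σij ^ 2) (y z : ℝ) :
    ∫ q : ℝ × ℝ, cexp (-I * q.1 * y) * cexp (-I * q.2 * z) * gaussPDF2 σii σjj σij q.1 q.2
      = cexp (-((σii * y ^ 2 + 2 * σij * y * z + σjj * z ^ 2) / 2 : ℝ)) := by
  have hint : Integrable (fun q : ℝ × ℝ =>
      cexp (-I * q.1 * y) * cexp (-I * q.2 * z) * gaussPDF2 σii σjj σij q.1 q.2) := by
    refine ((integrable_gaussPDF2 hii hd).ofReal (𝕜 := ℂ)).mono (by unfold gaussPDF2; fun_prop)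
      (.of_forall fun q => by simp [norm_exp])
  have hv : 0 < (σii * σjj - σij ^ 2) / σii := by positivity
  have hx : ∀ x : ℝ, cexp (-I * x * y) * gaussianPDFReal 0 σii.toNNReal x *
      cexp (-I * (σij / σii * x : ℝ) * z - ((σii * σjj - σij ^ 2) / σii : ℝ) * z ^ 2 / 2) =
      cexp (-I * x * (y + σij / σii * z : ℝ)) * gaussianPDFReal 0 σii.toNNReal x *
        cexp (-((σii * σjj - σij ^ 2) / σii * z ^ 2 / 2 : ℝ)) := fun x => by
    rw [sub_eq_add_neg, Complex.exp_add, ← mul_assoc, mul_right_comm (cexp _), ← Complex.exp_add]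
    congr 3 <;> push_cast <;> ring
  rw [Measure.volume_eq_prod] at hint ⊢
  simp_rw [integral_prod _ hint, gaussPDF2_eq_mul_gaussianPDFReal hii hd, ofReal_mul,
    mul_mul_mul_comm _ (cexp (-I * _ * (z : ℂ))), integral_const_mul,
    integral_cexp_mul_gaussianPDFReal _ (Real.toNNReal_pos.2 hv).ne', Real.coe_toNNReal _ hv.le,
    hx, integral_mul_const, integral_cexp_mul_gaussianPDFReal _ (Real.toNNReal_pos.2 hii).ne',
    Real.coe_toNNReal _ hii.le, ← Complex.exp_add]
  have : (σii : ℂ) ≠ 0 := by exact_mod_cast hii.ne'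
  congr 1
  push_cast
  field_simp
  ring

lemma ofReal_transMean_of_fourier {σ : ℝ} (hσ : 0 < σ) {g : ℝ → ℂ} (hg : Integrable g)
    {f : ℝ → ℝ} (c : ℂ) (hf : ∀ x : ℝ, (f x : ℂ) = c * ∫ y : ℝ, g y * cexp (-I * x * y)) :
    (transMean σ f : ℂ) = c * ∫ y : ℝ, g y * cexp (-(σ * y ^ 2 / 2 : ℝ)) := by
  rw [transMean, ← integral_complex_ofReal]
  simp_rw [ofReal_mul, hf, gaussPDF1_eq_gaussianPDFReal hσ.le, mul_assoc c, integral_const_mul]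
  rw [integral_integral_mul_comm_of_norm_le_one (integrable_gaussianPDFReal 0 _) hg
    (by fun_prop) fun x y => (norm_cexp_neg_I_mul x y).le]
  simp_rw [integral_cexp_mul_gaussianPDFReal 0 (Real.toNNReal_pos.2 hσ).ne',
    Real.coe_toNNReal _ hσ.le]
  congr 2 with y
  simp

lemma ofReal_integral_gaussPDF2_of_fourier {σii σjj σij : ℝ} (hii : 0 < σii)
    (hd : 0 < σii * σjj - σij ^ 2) {g₁ g₂ : ℝ → ℂ} (hg₁ : Integrable g₁) (hg₂ : Integrable g₂)
    {f₁ f₂ : ℝ → ℝ} (c₁ c₂ : ℂ)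
    (hf₁ : ∀ x : ℝ, (f₁ x : ℂ) = c₁ * ∫ y : ℝ, g₁ y * cexp (-I * x * y))
    (hf₂ : ∀ x : ℝ, (f₂ x : ℂ) = c₂ * ∫ y : ℝ, g₂ y * cexp (-I * x * y)) :
    ((∫ q : ℝ × ℝ, f₁ q.1 * f₂ q.2 * gaussPDF2 σii σjj σij q.1 q.2 : ℝ) : ℂ) =
      c₁ * c₂ * ∫ r : ℝ × ℝ, g₁ r.1 * g₂ r.2 *
        cexp (-((σii * r.1 ^ 2 + 2 * σij * r.1 * r.2 + σjj * r.2 ^ 2) / 2 : ℝ)) := by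
  have hg : Integrable (fun r : ℝ × ℝ => g₁ r.1 * g₂ r.2) := hg₁.mul_prod hg₂
  have hf : ∀ q : ℝ × ℝ, ((f₁ q.1 * f₂ q.2 : ℝ) : ℂ) = c₁ * c₂ *
      ∫ r : ℝ × ℝ, g₁ r.1 * g₂ r.2 * (cexp (-I * q.1 * r.1) * cexp (-I * q.2 * r.2)) := by
    intro q
    rw [ofReal_mul, hf₁, hf₂, mul_mul_mul_comm, Measure.volume_eq_prod, ← integral_prod_mul]
    simp_rw [mul_mul_mul_comm]
  rw [← integral_complex_ofReal]
  simp_rw [ofReal_mul _ (gaussPDF2 _ _ _ _ _), hf, mul_assoc (c₁ * c₂), integral_const_mul]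
  rw [integral_integral_mul_comm_of_norm_le_one (integrable_gaussPDF2 hii hd) hg (by fun_prop)
    fun q r => by rw [norm_mul, norm_cexp_neg_I_mul, norm_cexp_neg_I_mul, one_mul]]
  simp_rw [integral_cexp_mul_gaussPDF2 hii hd]

theorem transformed_covariance_fourier_general
    (σii σjj σij : ℝ) (hii : 0 < σii) (hjj : 0 < σjj)
    (hd : 0 < σii * σjj - σij ^ 2)
    (g₁ g₂ : ℝ → ℂ) (hg₁ : Integrable g₁) (hg₂ : Integrable g₂)
    (f₁ f₂ : ℝ → ℝ)
    (hf₁ : ∀ x : ℝ, (f₁ x : ℂ) =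
      (1 / (2 * π) : ℝ) * ∫ y : ℝ, g₁ y * Complex.exp (-Complex.I * x * y))
    (hf₂ : ∀ x : ℝ, (f₂ x : ℂ) =
      (1 / (2 * π) : ℝ) * ∫ y : ℝ, g₂ y * Complex.exp (-Complex.I * x * y)) :
    (transCov σii σjj σij f₁ f₂ : ℂ) =
      (1 / (4 * π ^ 2) : ℝ) *
        ∫ q : ℝ × ℝ, g₁ q.1 * g₂ q.2 *
          (Complex.exp (-(q.1 * q.2 * σij : ℝ)) - 1) *
          Complex.exp (-((q.1 ^ 2 * σii + q.2 ^ 2 * σjj) / 2 : ℝ)) := by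
  have hc : ((1 / (2 * π) : ℝ) : ℂ) * ((1 / (2 * π) : ℝ) : ℂ) =
      ((1 / (4 * π ^ 2) : ℝ) : ℂ) := by
    push_cast
    ring
  have hg : Integrable (fun r : ℝ × ℝ => g₁ r.1 * g₂ r.2) := hg₁.mul_prod hg₂
  have hmeans : (∫ y : ℝ, g₁ y * cexp (-(σii * y ^ 2 / 2 : ℝ))) *
      (∫ z : ℝ, g₂ z * cexp (-(σjj * z ^ 2 / 2 : ℝ))) =
      ∫ r : ℝ × ℝ, g₁ r.1 * g₂ r.2 * cexp (-((r.1 ^ 2 * σii + r.2 ^ 2 * σjj) / 2 : ℝ)) := by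
    rw [← integral_prod_mul, ← Measure.volume_eq_prod]
    congr 1 with r
    rw [mul_mul_mul_comm, ← Complex.exp_add]
    congr 2
    push_cast
    ring
  rw [transCov, ofReal_sub, ofReal_mul,
    ofReal_integral_gaussPDF2_of_fourier hii hd hg₁ hg₂ _ _ hf₁ hf₂,
    ofReal_transMean_of_fourier hii hg₁ _ hf₁, ofReal_transMean_of_fourier hjj hg₂ _ hf₂,
    mul_mul_mul_comm, hmeans, hc, ← mul_sub,
    ← integral_sub (hg.mul_cexp_neg_of_nonneg (by fun_prop) fun r =>
        div_nonneg (quadForm_nonneg hii hd r.1 r.2) zero_le_two)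
      (hg.mul_cexp_neg_of_nonneg (by fun_prop) fun r => by positivity)]
  congr 2 with r
  rw [show ((σii * r.1 ^ 2 + 2 * σij * r.1 * r.2 + σjj * r.2 ^ 2) / 2 : ℝ) =
    r.1 * r.2 * σij + (r.1 ^ 2 * σii + r.2 ^ 2 * σjj) / 2 by ring, ofReal_add, neg_add,
    Complex.exp_add]
  ring

theorem transformed_covariance_fourier
    (σii σjj σij : ℝ) (hii : 0 < σii) (hjj : 0 < σjj)
    (hd : 0 < σii * σjj - σij ^ 2)
    (g₁ g₂ : ℝ → ℂ) (hg₁ : Integrable g₁) (hg₂ : Integrable g₂)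
    (N : ℝ) (hb₁ : ∀ y, ‖g₁ y‖ ≤ N) (hb₂ : ∀ y, ‖g₂ y‖ ≤ N)
    (f₁ f₂ : ℝ → ℝ)
    (hf₁ : ∀ x : ℝ, (f₁ x : ℂ) =
      (1 / (2 * π) : ℝ) * ∫ y : ℝ, g₁ y * Complex.exp (-Complex.I * x * y))
    (hf₂ : ∀ x : ℝ, (f₂ x : ℂ) =
      (1 / (2 * π) : ℝ) * ∫ y : ℝ, g₂ y * Complex.exp (-Complex.I * x * y)) :
    (transCov σii σjj σij f₁ f₂ : ℂ) =
      (1 / (4 * π ^ 2) : ℝ) *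
        ∫ q : ℝ × ℝ, g₁ q.1 * g₂ q.2 *
          (Complex.exp (-(q.1 * q.2 * σij : ℝ)) - 1) *
          Complex.exp (-((q.1 ^ 2 * σii + q.2 ^ 2 * σjj) / 2 : ℝ)) :=
  transformed_covariance_fourier_general σii σjj σij hii hjj hd g₁ g₂ hg₁ hg₂ f₁ f₂ hf₁ hf₂
end

section
/- Let g₁, g₂ : ℝ → ℝ be continuous functions with compact support contained in [0,∞), and define f₁(x) := ∫_0^∞ g₁(t)·e^{−x·t} dt and f₂(x) := ∫_0^∞ g₂(t)·e^{−x·t} dt. Then the transformed covariance satisfies τ(f₁,f₂) = ∫_0^∞ ∫_0^∞ g₁(t₁)·g₂(t₂)·(e^{t₁·t₂·σij} − 1)·e^{(t₁²·σii + t₂²·σjj)/2} dt₁ dt₂. -/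
/-
Writing `f₁(x) f₂(w)` as a double Laplace integral over `(t₁, t₂)` and exchanging the order of
integration, the Gaussian integral becomes the moment generating function
`E[exp(-t₁ X - t₂ W)] = exp((t₁² σii + 2 σij t₁ t₂ + t₂² σjj) / 2)`. For `σij = 0` the bivariate
density is the product of the marginals, so the product of the transformed means is the same
expression with `σij = 0`; subtracting gives the formula. The exchange is justified because the
absolute integrand integrates in the Gaussian variable to `|g₁(t₁) g₂(t₂)|` times the moment
generating function, which is continuous and compactly supported in `t`.
-/

open MeasureTheory Real

open ProbabilityTheory

lemma gaussPDF1_sub_eq_gaussianPDFReal {σ : ℝ} (hσ : 0 ≤ σ) (m x : ℝ) :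
    gaussPDF1 σ (x - m) = gaussianPDFReal m σ.toNNReal x := by
  simp [gaussPDF1, gaussianPDFReal, Real.coe_toNNReal _ hσ]

lemma integrable_exp_mul_gaussPDF1_sub {σ : ℝ} (hσ : 0 < σ) (b m : ℝ) :
    Integrable (fun x ↦ exp (b * x) * gaussPDF1 σ (x - m)) := by
  have h := integrable_exp_mul_gaussianReal (μ := m) (v := σ.toNNReal) b
  rw [gaussianReal_of_var_ne_zero _ (by simpa using hσ),
    integrable_withDensity_iff_integrable_smul' (measurable_gaussianPDF _ _)
      (ae_of_all _ fun _ ↦ gaussianPDF_lt_top)] at h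
  simpa [toReal_gaussianPDF, gaussPDF1_sub_eq_gaussianPDFReal hσ.le, mul_comm] using h

lemma integral_exp_mul_gaussPDF1_sub {σ : ℝ} (hσ : 0 < σ) (b m : ℝ) :
    ∫ x, exp (b * x) * gaussPDF1 σ (x - m) = exp (m * b + σ * b ^ 2 / 2) := by
  have h := congrFun (mgf_id_gaussianReal (μ := m) (v := σ.toNNReal)) b
  rw [mgf, integral_gaussianReal_eq_integral_smul (by simpa using hσ)] at h
  simpa [gaussPDF1_sub_eq_gaussianPDFReal hσ.le, mul_comm, hσ.le] using h

section Bivariate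

variable {σii σjj σij : ℝ}

/-- The bivariate density is the marginal density of `w` times the conditional density of `x`
given `w`. -/
lemma gaussPDF2_eq_mul (hjj : 0 < σjj) (hd : 0 < σii * σjj - σij ^ 2) (x w : ℝ) :
    gaussPDF2 σii σjj σij x w =
      gaussPDF1 σjj w * gaussPDF1 ((σii * σjj - σij ^ 2) / σjj) (x - σij / σjj * w) := by
  unfold gaussPDF2 gaussPDF1
  rw [mul_mul_mul_comm, ← Real.exp_add]
  congr 1
  · rw [div_mul_div_comm, one_mul, ← Real.sqrt_mul (by positivity),
      show 2 * π * σjj * (2 * π * ((σii * σjj - σij ^ 2) / σjj)) =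
        (2 * π) ^ 2 * (σii * σjj - σij ^ 2) by field_simp,
      Real.sqrt_mul (by positivity), Real.sqrt_sq (by positivity)]
  · have : σjj * σii - σij ^ 2 ≠ 0 := by linarith
    congr 1
    field_simp
    ring

lemma exp_mul_gaussPDF2_eq (hjj : 0 < σjj) (hd : 0 < σii * σjj - σij ^ 2) (a b x w : ℝ) :
    exp (a * x + b * w) * gaussPDF2 σii σjj σij x w =
      exp (b * w) * gaussPDF1 σjj w *
        (exp (a * x) * gaussPDF1 ((σii * σjj - σij ^ 2) / σjj) (x - σij / σjj * w)) := by
  rw [gaussPDF2_eq_mul hjj hd, Real.exp_add]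
  ring

lemma integral_exp_mul_gaussPDF2_left (hjj : 0 < σjj) (hd : 0 < σii * σjj - σij ^ 2)
    (a b w : ℝ) :
    ∫ x, exp (a * x + b * w) * gaussPDF2 σii σjj σij x w =
      exp ((σii * σjj - σij ^ 2) / σjj * a ^ 2 / 2) *
        (exp ((b + σij / σjj * a) * w) * gaussPDF1 σjj w) := by
  simp_rw [exp_mul_gaussPDF2_eq hjj hd]
  rw [integral_const_mul, integral_exp_mul_gaussPDF1_sub (by positivity)]
  have : exp (b * w) * exp (σij / σjj * w * a + (σii * σjj - σij ^ 2) / σjj * a ^ 2 / 2) =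
      exp ((σii * σjj - σij ^ 2) / σjj * a ^ 2 / 2) * exp ((b + σij / σjj * a) * w) := by
    rw [← Real.exp_add, ← Real.exp_add]
    ring_nf
  linear_combination gaussPDF1 σjj w * this

lemma integrable_exp_mul_gaussPDF2 (hjj : 0 < σjj) (hd : 0 < σii * σjj - σij ^ 2) (a b : ℝ) :
    Integrable fun q : ℝ × ℝ ↦ exp (a * q.1 + b * q.2) * gaussPDF2 σii σjj σij q.1 q.2 := by
  rw [Measure.volume_eq_prod]
  refine (integrable_prod_iff' ?_).2 ⟨ae_of_all _ fun w ↦ ?_, ?_⟩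
  · exact Continuous.aestronglyMeasurable (by unfold gaussPDF2; fun_prop)
  · simp_rw [exp_mul_gaussPDF2_eq hjj hd]
    exact (integrable_exp_mul_gaussPDF1_sub (by positivity) _ _).const_mul _
  · have hnonneg : ∀ x w, 0 ≤ exp (a * x + b * w) * gaussPDF2 σii σjj σij x w := fun x w ↦ by
      unfold gaussPDF2; positivity
    simp_rw [Real.norm_of_nonneg (hnonneg _ _), integral_exp_mul_gaussPDF2_left hjj hd]
    exact (by simpa using integrable_exp_mul_gaussPDF1_sub hjj (b + σij / σjj * a) 0 :
      Integrable fun w ↦ exp ((b + σij / σjj * a) * w) * gaussPDF1 σjj w).const_mul _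

lemma integral_exp_mul_gaussPDF2 (hjj : 0 < σjj) (hd : 0 < σii * σjj - σij ^ 2) (a b : ℝ) :
    ∫ q : ℝ × ℝ, exp (a * q.1 + b * q.2) * gaussPDF2 σii σjj σij q.1 q.2 =
      exp ((a ^ 2 * σii + 2 * σij * a * b + b ^ 2 * σjj) / 2) := by
  have h := integrable_exp_mul_gaussPDF2 hjj hd a b
  rw [Measure.volume_eq_prod] at h ⊢
  rw [integral_prod_symm _ h]
  simp_rw [integral_exp_mul_gaussPDF2_left hjj hd]
  have hw : ∫ w, exp ((b + σij / σjj * a) * w) * gaussPDF1 σjj w =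
      exp (σjj * (b + σij / σjj * a) ^ 2 / 2) := by
    simpa using integral_exp_mul_gaussPDF1_sub hjj (b + σij / σjj * a) 0
  rw [integral_const_mul, hw, ← Real.exp_add]
  congr 1
  field_simp
  ring

end Bivariate

lemma HasCompactSupport.mul_prod {α β M : Type*} [TopologicalSpace α] [TopologicalSpace β]
    [MulZeroClass M] {f : α → M} {g : β → M} (hf : HasCompactSupport f)
    (hg : HasCompactSupport g) : HasCompactSupport fun p : α × β ↦ f p.1 * g p.2 := by
  refine HasCompactSupport.intro' (hf.prod hg) (isClosed_tsupport f |>.prod (isClosed_tsupport g))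
    fun p hp ↦ ?_
  rcases not_and_or.1 hp with h | h
  · rw [image_eq_zero_of_notMem_tsupport h, zero_mul]
  · rw [image_eq_zero_of_notMem_tsupport h, mul_zero]

noncomputable def laplace (ν : Measure ℝ) (g : ℝ → ℝ) (x : ℝ) : ℝ :=
  ∫ t, g t * exp (-(x * t)) ∂ν

section Laplace

variable {σii σjj σij : ℝ} {ν₁ ν₂ : Measure ℝ} [SFinite ν₁] [SFinite ν₂]
  [IsFiniteMeasureOnCompacts ν₁] [IsFiniteMeasureOnCompacts ν₂] {g₁ g₂ : ℝ → ℝ}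

lemma integrable_laplace_kernel_mul_gaussPDF2 (hjj : 0 < σjj) (hd : 0 < σii * σjj - σij ^ 2)
    (hc₁ : Continuous g₁) (hc₂ : Continuous g₂)
    (hs₁ : HasCompactSupport g₁) (hs₂ : HasCompactSupport g₂) :
    Integrable (Function.uncurry fun q t : ℝ × ℝ ↦
        g₁ t.1 * g₂ t.2 * (exp (-t.1 * q.1 + -t.2 * q.2) * gaussPDF2 σii σjj σij q.1 q.2))
      (volume.prod (ν₁.prod ν₂)) := by
  refine (integrable_prod_iff' ?_).2 ⟨ae_of_all _ fun t ↦ ?_, ?_⟩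
  · exact Continuous.aestronglyMeasurable (by unfold gaussPDF2 Function.uncurry; fun_prop)
  · simpa only [Function.uncurry_apply_pair] using
      (integrable_exp_mul_gaussPDF2 hjj hd _ _).const_mul _
  · have hnonneg : ∀ q t : ℝ × ℝ,
        0 ≤ exp (-t.1 * q.1 + -t.2 * q.2) * gaussPDF2 σii σjj σij q.1 q.2 := fun q t ↦ by
      unfold gaussPDF2; positivity
    simp only [Function.uncurry_apply_pair, norm_mul, Real.norm_of_nonneg (hnonneg _ _)]
    simp_rw [integral_const_mul, integral_exp_mul_gaussPDF2 hjj hd]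
    exact Continuous.integrable_of_hasCompactSupport (by fun_prop)
      (hs₁.norm.mul_prod hs₂.norm).mul_right

lemma integral_laplace_mul_laplace_mul_gaussPDF2 (hjj : 0 < σjj) (hd : 0 < σii * σjj - σij ^ 2)
    (hc₁ : Continuous g₁) (hc₂ : Continuous g₂)
    (hs₁ : HasCompactSupport g₁) (hs₂ : HasCompactSupport g₂) :
    ∫ q : ℝ × ℝ, laplace ν₁ g₁ q.1 * laplace ν₂ g₂ q.2 * gaussPDF2 σii σjj σij q.1 q.2 =
      ∫ t, g₁ t.1 * g₂ t.2 * exp ((t.1 ^ 2 * σii + 2 * σij * t.1 * t.2 + t.2 ^ 2 * σjj) / 2)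
        ∂(ν₁.prod ν₂) := by
  have hkernel : ∀ q : ℝ × ℝ,
      laplace ν₁ g₁ q.1 * laplace ν₂ g₂ q.2 * gaussPDF2 σii σjj σij q.1 q.2 =
        ∫ t, g₁ t.1 * g₂ t.2 * (exp (-t.1 * q.1 + -t.2 * q.2) * gaussPDF2 σii σjj σij q.1 q.2)
          ∂(ν₁.prod ν₂) := fun q ↦ by
    rw [laplace, laplace, ← integral_prod_mul, ← integral_mul_const]
    congr 1 with t
    rw [Real.exp_add]
    ring_nf
  simp_rw [hkernel]
  rw [integral_integral_swap (integrable_laplace_kernel_mul_gaussPDF2 hjj hd hc₁ hc₂ hs₁ hs₂)]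
  congr 1 with t
  rw [integral_const_mul, integral_exp_mul_gaussPDF2 hjj hd]
  ring_nf

end Laplace

lemma gaussPDF2_zero_eq_mul {σii σjj : ℝ} (hii : 0 < σii) (hjj : 0 < σjj) (x w : ℝ) :
    gaussPDF2 σii σjj 0 x w = gaussPDF1 σii x * gaussPDF1 σjj w := by
  rw [gaussPDF2_eq_mul hjj (by simpa using mul_pos hii hjj), mul_comm]
  simp [hjj.ne']

lemma transMean_mul_transMean {σii σjj : ℝ} (hii : 0 < σii) (hjj : 0 < σjj) (f g : ℝ → ℝ) :
    transMean σii f * transMean σjj g =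
      ∫ q : ℝ × ℝ, f q.1 * g q.2 * gaussPDF2 σii σjj 0 q.1 q.2 := by
  rw [transMean, transMean, ← integral_prod_mul, Measure.volume_eq_prod]
  congr 1 with q
  rw [gaussPDF2_zero_eq_mul hii hjj]
  ring

theorem transformed_covariance_laplace_general
    (σii σjj σij : ℝ) (hii : 0 < σii) (hjj : 0 < σjj)
    (hd : 0 < σii * σjj - σij ^ 2)
    (g₁ g₂ : ℝ → ℝ) (hc₁ : Continuous g₁) (hc₂ : Continuous g₂)
    (hs₁ : HasCompactSupport g₁) (hs₂ : HasCompactSupport g₂)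
    (f₁ f₂ : ℝ → ℝ)
    (hf₁ : ∀ x : ℝ, f₁ x = ∫ t in Set.Ioi (0 : ℝ), g₁ t * Real.exp (-(x * t)))
    (hf₂ : ∀ x : ℝ, f₂ x = ∫ t in Set.Ioi (0 : ℝ), g₂ t * Real.exp (-(x * t))) :
    transCov σii σjj σij f₁ f₂ =
      ∫ t₁ in Set.Ioi (0 : ℝ), ∫ t₂ in Set.Ioi (0 : ℝ),
        g₁ t₁ * g₂ t₂ * (Real.exp (t₁ * t₂ * σij) - 1) *
          Real.exp ((t₁ ^ 2 * σii + t₂ ^ 2 * σjj) / 2) := by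
  obtain rfl : f₁ = laplace (volume.restrict (Set.Ioi 0)) g₁ := funext hf₁
  obtain rfl : f₂ = laplace (volume.restrict (Set.Ioi 0)) g₂ := funext hf₂
  have hd₀ : 0 < σii * σjj - (0 : ℝ) ^ 2 := by simpa using mul_pos hii hjj
  have hsupp : HasCompactSupport fun t : ℝ × ℝ ↦ g₁ t.1 * g₂ t.2 := hs₁.mul_prod hs₂
  rw [transCov, transMean_mul_transMean hii hjj,
    integral_laplace_mul_laplace_mul_gaussPDF2 hjj hd hc₁ hc₂ hs₁ hs₂,
    integral_laplace_mul_laplace_mul_gaussPDF2 hjj hd₀ hc₁ hc₂ hs₁ hs₂, ← integral_sub,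
    integral_integral]
  · congr 1 with t
    rw [show (t.1 ^ 2 * σii + 2 * σij * t.1 * t.2 + t.2 ^ 2 * σjj) / 2 =
        t.1 * t.2 * σij + (t.1 ^ 2 * σii + t.2 ^ 2 * σjj) / 2 by ring, Real.exp_add]
    ring_nf
  · exact Continuous.integrable_of_hasCompactSupport (by fun_prop) hsupp.mul_right.mul_right
  all_goals exact Continuous.integrable_of_hasCompactSupport (by fun_prop) hsupp.mul_right

theorem transformed_covariance_laplace
    (σii σjj σij : ℝ) (hii : 0 < σii) (hjj : 0 < σjj)
    (hd : 0 < σii * σjj - σij ^ 2)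
    (g₁ g₂ : ℝ → ℝ) (hc₁ : Continuous g₁) (hc₂ : Continuous g₂)
    (hs₁ : HasCompactSupport g₁) (hs₂ : HasCompactSupport g₂)
    (hsupp₁ : tsupport g₁ ⊆ Set.Ici 0) (hsupp₂ : tsupport g₂ ⊆ Set.Ici 0)
    (f₁ f₂ : ℝ → ℝ)
    (hf₁ : ∀ x : ℝ, f₁ x = ∫ t in Set.Ioi (0 : ℝ), g₁ t * Real.exp (-(x * t)))
    (hf₂ : ∀ x : ℝ, f₂ x = ∫ t in Set.Ioi (0 : ℝ), g₂ t * Real.exp (-(x * t))) :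
    transCov σii σjj σij f₁ f₂ =
      ∫ t₁ in Set.Ioi (0 : ℝ), ∫ t₂ in Set.Ioi (0 : ℝ),
        g₁ t₁ * g₂ t₂ * (Real.exp (t₁ * t₂ * σij) - 1) *
          Real.exp ((t₁ ^ 2 * σii + t₂ ^ 2 * σjj) / 2) :=
  transformed_covariance_laplace_general σii σjj σij hii hjj hd g₁ g₂ hc₁ hc₂ hs₁ hs₂ f₁ f₂ hf₁ hf₂
end

section
/- Let f(x) := x³ + x² + x. Then the transformed mean is ν(f) = σii and the transformed covariance satisfies τ(f,f) = σij + 3·σii·σij + 3·σjj·σij + 2·σij² + 9·σii·σjj·σij + 6·σij³. -/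
/-!
Completing the square, the bivariate density factors as `φ_{σii}(x) · φ_c(w - m x)` with
`m = σij / σii` and `c = (σii σjj - σij²) / σii`: given `x`, `w` is Gaussian with mean `m x` and
variance `c`. The shear `w = u + m x` preserves Lebesgue measure, so by Fubini the covariance
reduces to one-dimensional Gaussian integrals of polynomials, and these follow from the moment
recursion `∫ x^(n+2) φ_σ = (n+1) σ ∫ x^n φ_σ` (integration by parts, as `φ_σ' = -(x/σ) φ_σ`).
-/

open MeasureTheory Real

open Polynomial Polynomial.Bivariate

section Univariate

variable {σ : ℝ}

lemma gaussPDF1_eq_mul_exp_neg_mul_sq (σ x : ℝ) :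
    gaussPDF1 σ x = (√(2 * π * σ))⁻¹ * rexp (-(2 * σ)⁻¹ * x ^ 2) := by
  rw [gaussPDF1, one_div, neg_mul, neg_div, div_eq_inv_mul]

lemma integrable_pow_mul_gaussPDF1 (hσ : 0 < σ) (n : ℕ) :
    Integrable fun x ↦ x ^ n * gaussPDF1 σ x := by
  have h := integrable_rpow_mul_exp_neg_mul_sq (b := (2 * σ)⁻¹) (by positivity)
    (s := n) (by linarith [n.cast_nonneg (α := ℝ)])
  simp only [rpow_natCast] at h
  simpa only [gaussPDF1_eq_mul_exp_neg_mul_sq, mul_left_comm] using h.const_mul (√(2 * π * σ))⁻¹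

lemma hasDerivAt_gaussPDF1 (σ x : ℝ) :
    HasDerivAt (gaussPDF1 σ) (-(x / σ) * gaussPDF1 σ x) x := by
  have h : HasDerivAt (fun y ↦ -y ^ 2 / (2 * σ)) (-(2 * x) / (2 * σ)) x := by
    simpa using ((hasDerivAt_pow 2 x).neg.div_const (2 * σ))
  exact (h.exp.const_mul (1 / √(2 * π * σ))).congr_deriv (by rw [gaussPDF1]; ring)

lemma integral_gaussPDF1 (hσ : 0 < σ) : ∫ x, gaussPDF1 σ x = 1 := by
  simp only [gaussPDF1_eq_mul_exp_neg_mul_sq, integral_const_mul, integral_gaussian]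
  rw [show π / (2 * σ)⁻¹ = 2 * π * σ by field_simp]
  exact inv_mul_cancel₀ (by positivity)

lemma integral_mul_gaussPDF1 (hσ : 0 < σ) : ∫ x, x * gaussPDF1 σ x = 0 := by
  refine integral_eq_zero_of_hasDerivAt_of_integrable
    (fun x ↦ ((hasDerivAt_gaussPDF1 σ x).const_mul (-σ)).congr_deriv ?_)
    (by simpa using integrable_pow_mul_gaussPDF1 hσ 1)
    ((integrable_pow_mul_gaussPDF1 hσ 0).const_mul (-σ) |>.congr (by simp))
  field_simp

lemma integral_pow_add_two_mul_gaussPDF1 (hσ : 0 < σ) (n : ℕ) :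
    ∫ x, x ^ (n + 2) * gaussPDF1 σ x = (n + 1) * σ * ∫ x, x ^ n * gaussPDF1 σ x := by
  have hn := (integrable_pow_mul_gaussPDF1 hσ n).const_mul (n + 1 : ℝ)
  have hn2 := (integrable_pow_mul_gaussPDF1 hσ (n + 2)).const_mul σ⁻¹
  have hibp := integral_eq_zero_of_hasDerivAt_of_integrable
    (fun x ↦ ((hasDerivAt_pow (n + 1) x).mul (hasDerivAt_gaussPDF1 σ x)).congr_deriv
      (show _ = (n + 1 : ℝ) * (x ^ n * gaussPDF1 σ x) - σ⁻¹ * (x ^ (n + 2) * gaussPDF1 σ x) by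
        push_cast; ring))
    (hn.sub hn2) (integrable_pow_mul_gaussPDF1 hσ (n + 1))
  rw [integral_sub hn hn2, integral_const_mul, integral_const_mul, sub_eq_zero,
    eq_inv_mul_iff_mul_eq₀ hσ.ne'] at hibp
  linear_combination -hibp

lemma integral_pow_odd_mul_gaussPDF1 (hσ : 0 < σ) (k : ℕ) :
    ∫ x, x ^ (2 * k + 1) * gaussPDF1 σ x = 0 := by
  induction k with
  | zero => simpa using integral_mul_gaussPDF1 hσ
  | succ k ih => rw [show 2 * (k + 1) + 1 = 2 * k + 1 + 2 by ring,
      integral_pow_add_two_mul_gaussPDF1 hσ, ih, mul_zero]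

open scoped Nat in
/-- For `k = 0` the factor is `(0 - 1 : ℕ)‼ = 0‼ = 1`. -/
lemma integral_pow_even_mul_gaussPDF1 (hσ : 0 < σ) (k : ℕ) :
    ∫ x, x ^ (2 * k) * gaussPDF1 σ x = (2 * k - 1 : ℕ)‼ * σ ^ k := by
  induction k with
  | zero => simpa using integral_gaussPDF1 hσ
  | succ k ih =>
    rw [mul_add_one, integral_pow_add_two_mul_gaussPDF1 hσ, ih,
      show 2 * k + 2 - 1 = 2 * k + 1 by omega, Nat.doubleFactorial_add_one]
    push_cast
    ring

lemma integral_sum_pow_mul_gaussPDF1 {ι : Type*} (hσ : 0 < σ) (s : Finset ι) (c : ι → ℝ)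
    (k : ι → ℕ) :
    ∫ x, (∑ i ∈ s, c i * x ^ k i) * gaussPDF1 σ x =
      ∑ i ∈ s, c i * ∫ x, x ^ k i * gaussPDF1 σ x := by
  simp_rw [Finset.sum_mul, mul_assoc]
  rw [integral_finsetSum _ fun i _ ↦ (integrable_pow_mul_gaussPDF1 hσ (k i)).const_mul (c i)]
  simp_rw [integral_const_mul]

lemma integral_sextic_mul_gaussPDF1 (hσ : 0 < σ) (c₀ c₁ c₂ c₃ c₄ c₅ c₆ : ℝ) :
    ∫ x, (c₀ + c₁ * x + c₂ * x ^ 2 + c₃ * x ^ 3 + c₄ * x ^ 4 + c₅ * x ^ 5 + c₆ * x ^ 6) *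
      gaussPDF1 σ x = c₀ + c₂ * σ + 3 * c₄ * σ ^ 2 + 15 * c₆ * σ ^ 3 := by
  have h := integral_sum_pow_mul_gaussPDF1 hσ Finset.univ ![c₀, c₁, c₂, c₃, c₄, c₅, c₆]
    (fun i : Fin 7 ↦ i)
  have m2 := integral_pow_even_mul_gaussPDF1 hσ 1
  have m4 := integral_pow_even_mul_gaussPDF1 hσ 2
  have m6 := integral_pow_even_mul_gaussPDF1 hσ 3
  have m3 := integral_pow_odd_mul_gaussPDF1 hσ 1
  have m5 := integral_pow_odd_mul_gaussPDF1 hσ 2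
  norm_num [Fin.sum_univ_succ, Nat.doubleFactorial, integral_gaussPDF1 hσ,
    integral_mul_gaussPDF1 hσ] at h m2 m3 m4 m5 m6
  rw [m2, m3, m4, m5, m6] at h
  simp only [add_assoc, h]
  ring

lemma integrable_eval_mul_gaussPDF1 (hσ : 0 < σ) (p : ℝ[X]) :
    Integrable fun x ↦ p.eval x * gaussPDF1 σ x := by
  induction p using Polynomial.induction_on' with
  | add p q hp hq =>
    simp only [eval_add, add_mul]
    exact hp.add hq
  | monomial n a =>
    simpa only [eval_monomial, mul_assoc] using (integrable_pow_mul_gaussPDF1 hσ n).const_mul a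

lemma integral_cubic_mul_gaussPDF1 (hσ : 0 < σ) :
    ∫ x, (x ^ 3 + x ^ 2 + x) * gaussPDF1 σ x = σ := by
  calc _ = ∫ x, (0 + 1 * x + 1 * x ^ 2 + 1 * x ^ 3 + 0 * x ^ 4 + 0 * x ^ 5 + 0 * x ^ 6) *
        gaussPDF1 σ x := by congr 1; ext x; ring
    _ = σ := by rw [integral_sextic_mul_gaussPDF1 hσ]; ring

lemma integral_cubic_add_mul_gaussPDF1 (hσ : 0 < σ) (a : ℝ) :
    ∫ u, ((u + a) ^ 3 + (u + a) ^ 2 + (u + a)) * gaussPDF1 σ u =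
      a ^ 3 + a ^ 2 + a + (3 * a + 1) * σ := by
  calc _ = ∫ u, ((a ^ 3 + a ^ 2 + a) + (3 * a ^ 2 + 2 * a + 1) * u + (3 * a + 1) * u ^ 2 +
        1 * u ^ 3 + 0 * u ^ 4 + 0 * u ^ 5 + 0 * u ^ 6) * gaussPDF1 σ u := by congr 1; ext u; ring
    _ = _ := by rw [integral_sextic_mul_gaussPDF1 hσ]; ring

end Univariate

lemma gaussPDF2_eq_gaussPDF1_mul_gaussPDF1 {σii σjj σij : ℝ} (hii : 0 < σii)
    (hd : 0 < σii * σjj - σij ^ 2) (x w : ℝ) :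
    gaussPDF2 σii σjj σij x w =
      gaussPDF1 σii x * gaussPDF1 ((σii * σjj - σij ^ 2) / σii) (w - σij / σii * x) := by
  have hc : 0 < (σii * σjj - σij ^ 2) / σii := div_pos hd hii
  have hsqrt : √(2 * π * σii) * √(2 * π * ((σii * σjj - σij ^ 2) / σii)) =
      2 * π * √(σii * σjj - σij ^ 2) := by
    rw [← sqrt_mul (by positivity), show 2 * π * σii * (2 * π * ((σii * σjj - σij ^ 2) / σii)) =
      (2 * π) ^ 2 * (σii * σjj - σij ^ 2) by field_simp, sqrt_mul (by positivity),
      sqrt_sq (by positivity)]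
  have hexp : -(σjj * x ^ 2 - 2 * σij * x * w + σii * w ^ 2) / (2 * (σii * σjj - σij ^ 2)) =
      -x ^ 2 / (2 * σii) + -(w - σij / σii * x) ^ 2 / (2 * ((σii * σjj - σij ^ 2) / σii)) := by
    rw [div_add_div _ _ (by positivity) (by positivity),
      div_eq_div_iff (by positivity) (by positivity)]
    field_simp
    ring
  rw [gaussPDF2, gaussPDF1, gaussPDF1, hexp, exp_add, ← hsqrt]
  ring

noncomputable def shear (m : ℝ) : (ℝ × ℝ) ≃ᵐ (ℝ × ℝ) where
  toFun z := (z.1, z.2 + m * z.1)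
  invFun z := (z.1, z.2 - m * z.1)
  left_inv z := by simp
  right_inv z := by simp
  measurable_toFun := show Measurable fun z : ℝ × ℝ ↦ (z.1, z.2 + m * z.1) by fun_prop
  measurable_invFun := show Measurable fun z : ℝ × ℝ ↦ (z.1, z.2 - m * z.1) by fun_prop

lemma measurePreserving_shear (m : ℝ) : MeasurePreserving (shear m) := by
  rw [Measure.volume_eq_prod]
  exact (MeasurePreserving.id volume).skew_product (by fun_prop)
    (.of_forall fun x ↦ (measurePreserving_add_right volume (m * x)).map_eq)

lemma integral_eq_integral_integral_shear (m : ℝ) {F : ℝ × ℝ → ℝ}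
    (hF : Integrable fun z : ℝ × ℝ ↦ F (z.1, z.2 + m * z.1)) :
    ∫ z, F z = ∫ x, ∫ u, F (x, u + m * x) := by
  rw [← (measurePreserving_shear m).integral_comp (shear m).measurableEmbedding]
  rw [Measure.volume_eq_prod] at hF ⊢
  exact integral_prod _ hF

section Bivariate

variable {σ c : ℝ}

lemma integrable_evalEval_mul_gaussPDF1_mul_gaussPDF1 (hσ : 0 < σ) (hc : 0 < c) (P : ℝ[X][Y]) :
    Integrable fun z : ℝ × ℝ ↦ P.evalEval z.1 z.2 * (gaussPDF1 σ z.1 * gaussPDF1 c z.2) := by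
  induction P using Polynomial.induction_on' with
  | add P Q hP hQ =>
    simp only [evalEval_add, add_mul]
    exact hP.add hQ
  | monomial n p =>
    rw [Measure.volume_eq_prod]
    simpa only [evalEval, eval_monomial, eval_mul, eval_pow, eval_C, mul_mul_mul_comm] using
      (integrable_eval_mul_gaussPDF1 hσ p).mul_prod (integrable_pow_mul_gaussPDF1 hc n)

lemma integral_cubic_mul_cubic_mul_gaussPDF1_shear (hσ : 0 < σ) (hc : 0 < c) (m : ℝ) :
    ∫ q : ℝ × ℝ, (q.1 ^ 3 + q.1 ^ 2 + q.1) * (q.2 ^ 3 + q.2 ^ 2 + q.2) *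
      (gaussPDF1 σ q.1 * gaussPDF1 c (q.2 - m * q.1)) =
      (c + m + 3 * m * c) * σ + 3 * (m + 3 * m * c + m ^ 2 + m ^ 3) * σ ^ 2 +
        15 * m ^ 3 * σ ^ 3 := by
  have hint := integrable_evalEval_mul_gaussPDF1_mul_gaussPDF1 hσ hc
    ((C X ^ 3 + C X ^ 2 + C X) *
      ((X + C (C m * X)) ^ 3 + (X + C (C m * X)) ^ 2 + (X + C (C m * X))))
  rw [integral_eq_integral_integral_shear m (by simpa [evalEval_C] using hint)]
  simp only [add_sub_cancel_right]
  have hinner (x : ℝ) :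
      ∫ u, (x ^ 3 + x ^ 2 + x) * ((u + m * x) ^ 3 + (u + m * x) ^ 2 + (u + m * x)) *
        (gaussPDF1 σ x * gaussPDF1 c u) =
      (x ^ 3 + x ^ 2 + x) * gaussPDF1 σ x *
        ((m * x) ^ 3 + (m * x) ^ 2 + m * x + (3 * (m * x) + 1) * c) := by
    rw [← integral_cubic_add_mul_gaussPDF1 hc, ← integral_const_mul]
    congr 1; ext u; ring
  simp_rw [hinner]
  calc _ = ∫ x, (0 + c * x + (m + 3 * m * c + c) * x ^ 2 + (m ^ 2 + m + 3 * m * c + c) * x ^ 3 +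
        (m ^ 3 + m ^ 2 + m + 3 * m * c) * x ^ 4 + (m ^ 3 + m ^ 2) * x ^ 5 + m ^ 3 * x ^ 6) *
        gaussPDF1 σ x := by congr 1; ext x; ring
    _ = _ := by rw [integral_sextic_mul_gaussPDF1 hσ]; ring

end Bivariate

lemma integral_cubic_mul_cubic_mul_gaussPDF2 {σii σjj σij : ℝ} (hii : 0 < σii)
    (hd : 0 < σii * σjj - σij ^ 2) :
    ∫ q : ℝ × ℝ, (q.1 ^ 3 + q.1 ^ 2 + q.1) * (q.2 ^ 3 + q.2 ^ 2 + q.2) *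
      gaussPDF2 σii σjj σij q.1 q.2 =
      σii * σjj + σij + 3 * σii * σij + 3 * σjj * σij + 2 * σij ^ 2 + 9 * σii * σjj * σij +
        6 * σij ^ 3 := by
  simp_rw [gaussPDF2_eq_gaussPDF1_mul_gaussPDF1 hii hd]
  rw [integral_cubic_mul_cubic_mul_gaussPDF1_shear hii (div_pos hd hii)]
  field_simp
  ring

theorem transformed_moments_cubic
    (σii σjj σij : ℝ) (hii : 0 < σii) (hjj : 0 < σjj)
    (hd : 0 < σii * σjj - σij ^ 2) :
    transMean σii (fun x => x ^ 3 + x ^ 2 + x) = σii ∧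
    transCov σii σjj σij (fun x => x ^ 3 + x ^ 2 + x) (fun x => x ^ 3 + x ^ 2 + x) =
      σij + 3 * σii * σij + 3 * σjj * σij + 2 * σij ^ 2 + 9 * σii * σjj * σij + 6 * σij ^ 3 := by
  refine ⟨integral_cubic_mul_gaussPDF1 hii, ?_⟩
  rw [transCov, transMean, transMean, integral_cubic_mul_gaussPDF1 hii,
    integral_cubic_mul_gaussPDF1 hjj, integral_cubic_mul_cubic_mul_gaussPDF2 hii hd]
  ring
end
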